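/- arXiv:2601.20027 — 4 statements merged into one kernel-verified Lean document; each statement's English description precedes it below -/
import Mathlib

section
/- For all non-negative integers m and k, the integral of x^{2m} · sin(2kx)/sin(x) over [0, π/2] equals 2·(2m)! times the sum over j from 0 to m of (-1)^j · Ō_k^{(2j+1)}/(2m-2j)! · (π/2)^{2m-2j}, where Ō_k^{(s)} = Σ_{n=1}^{k} (-1)^{n-1}/(2n-1)^s is the alternating odd harmonic number of order s. -/
/-!
Telescoping `2 sin x cos ((2n+1)x) = sin ((2n+2)x) - sin (2nx)` turns the integrand into
`2 ∑_{n<k} x^{2m} cos ((2n+1)x)`. For `c = 2n+1` the endpoint `π/2` is a zero of `cos (c x)` and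
`sin (c π/2) = (-1)^n`, so two integrations by parts give the recursion
`I_{m+1} = (π/2)^{2m+2} (-1)^n / c - (2m+2)(2m+1)/c² · I_m`, whose solution is a finite sum
in the powers `c^{-(2j+1)}`; summing over `n` collects these powers into `Ō_k^{(2j+1)}`.
-/

open Real Finset

/-- Alternating odd harmonic number `Ō_k^{(s)} = ∑_{n=1}^k (-1)^{n-1}/(2n-1)^s`. -/
noncomputable def Obar (k s : ℕ) : ℝ := ∑ n ∈ Finset.range k, (-1)^n / ((2*(n:ℝ)+1))^s

open intervalIntegral
open scoped Nat

theorem sin_two_mul_nat_mul_eq_sin_mul_sum_cos (k : ℕ) (x : ℝ) :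
    sin (2 * k * x) = sin x * (2 * ∑ n ∈ range k, cos ((2 * n + 1) * x)) := by
  have htel (n : ℕ) :
      sin x * (2 * cos ((2 * n + 1) * x)) = sin (2 * (n + 1 : ℕ) * x) - sin (2 * n * x) := by
    rw [mul_left_comm, ← mul_assoc, two_mul_sin_mul_cos,
      show x - (2 * n + 1) * x = -(2 * n * x) by ring, sin_neg]
    push_cast; ring_nf
  rw [mul_sum, mul_sum, sum_congr rfl fun n _ => htel n,
    sum_range_sub (fun n : ℕ => sin (2 * n * x))]
  simp

theorem hasDerivAt_sin_mul_div {c : ℝ} (hc : c ≠ 0) (x : ℝ) :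
    HasDerivAt (fun y => sin (c * y) / c) (cos (c * x)) x := by
  simpa [hc] using ((hasDerivAt_id x).const_mul c).sin.div_const c

theorem hasDerivAt_neg_cos_mul_div {c : ℝ} (hc : c ≠ 0) (x : ℝ) :
    HasDerivAt (fun y => -cos (c * y) / c) (sin (c * x)) x := by
  simpa [hc] using ((hasDerivAt_id x).const_mul c).cos.neg.div_const c

theorem integral_pow_succ_mul_cos {c : ℝ} (hc : c ≠ 0) (a : ℝ) (p : ℕ) :
    ∫ x in 0..a, x ^ (p + 1) * cos (c * x) =
      a ^ (p + 1) * sin (c * a) / c - (p + 1) / c * ∫ x in 0..a, x ^ p * sin (c * x) := by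
  rw [integral_mul_deriv_eq_deriv_mul (fun x _ => hasDerivAt_pow (p + 1) x)
    (fun x _ => hasDerivAt_sin_mul_div hc x) (Continuous.intervalIntegrable (by fun_prop) _ _)
    (Continuous.intervalIntegrable (by fun_prop) _ _), ← integral_const_mul]
  simp only [zero_pow p.succ_ne_zero, zero_mul, sub_zero]
  congr 1
  · ring
  · exact integral_congr fun x _ => by push_cast; ring

theorem integral_pow_succ_mul_sin {c : ℝ} (hc : c ≠ 0) (a : ℝ) (p : ℕ) :
    ∫ x in 0..a, x ^ (p + 1) * sin (c * x) =
      -(a ^ (p + 1) * cos (c * a) / c) + (p + 1) / c * ∫ x in 0..a, x ^ p * cos (c * x) := by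
  rw [integral_mul_deriv_eq_deriv_mul (fun x _ => hasDerivAt_pow (p + 1) x)
    (fun x _ => hasDerivAt_neg_cos_mul_div hc x) (Continuous.intervalIntegrable (by fun_prop) _ _)
    (Continuous.intervalIntegrable (by fun_prop) _ _), ← integral_const_mul]
  simp only [zero_pow p.succ_ne_zero, zero_mul, sub_zero]
  rw [sub_eq_add_neg, ← integral_neg]
  congr 1
  · ring
  · exact integral_congr fun x _ => by push_cast; ring

theorem integral_pow_add_two_mul_cos_of_cos_eq_zero {a c : ℝ} (hc : c ≠ 0)
    (hca : cos (c * a) = 0) (p : ℕ) :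
    ∫ x in 0..a, x ^ (p + 2) * cos (c * x) =
      a ^ (p + 2) * sin (c * a) / c -
        (p + 2) * (p + 1) / c ^ 2 * ∫ x in 0..a, x ^ p * cos (c * x) := by
  rw [integral_pow_succ_mul_cos hc, integral_pow_succ_mul_sin hc, hca]
  push_cast
  field_simp
  ring

theorem integral_pow_two_mul_mul_cos_of_cos_eq_zero {a c : ℝ} (hca : cos (c * a) = 0) (m : ℕ) :
    ∫ x in 0..a, x ^ (2 * m) * cos (c * x) =
      sin (c * a) * (2 * m)! *
        ∑ j ∈ range (m + 1),
          (-1) ^ j / c ^ (2 * j + 1) / (2 * m - 2 * j)! * a ^ (2 * m - 2 * j) := by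
  have hc : c ≠ 0 := by rintro rfl; simp at hca
  induction m with
  | zero =>
    simp [integral_comp_mul_left (fun x => cos x) hc, div_eq_inv_mul, mul_comm]
  | succ m ih =>
    have hshift (j : ℕ) :
        (-1) ^ (j + 1) / c ^ (2 * (j + 1) + 1) / (2 * m + 2 - 2 * (j + 1))! *
            a ^ (2 * m + 2 - 2 * (j + 1)) =
          -((-1) ^ j / c ^ (2 * j + 1) / (2 * m - 2 * j)! * a ^ (2 * m - 2 * j)) / c ^ 2 := by
      rw [show 2 * m + 2 - 2 * (j + 1) = 2 * m - 2 * j by omega]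
      field_simp
      ring
    have hfact : ((2 * m + 2)! : ℝ) = (2 * m + 2) * (2 * m + 1) * (2 * m)! := by
      push_cast [Nat.factorial_succ]; ring
    rw [show 2 * (m + 1) = 2 * m + 2 by ring,
      integral_pow_add_two_mul_cos_of_cos_eq_zero hc hca, ih, sum_range_succ' _ (m + 1),
      sum_congr rfl fun j _ => hshift j, ← sum_div, sum_neg_distrib]
    simp only [mul_zero, Nat.sub_zero, pow_zero, zero_add, pow_one, hfact]
    push_cast
    field_simp
    ring

theorem cos_odd_mul_pi_div_two (n : ℕ) : cos ((2 * n + 1) * (π / 2)) = 0 :=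
  cos_eq_zero_iff.2 ⟨n, by push_cast; ring⟩

theorem sin_odd_mul_pi_div_two (n : ℕ) : sin ((2 * n + 1) * (π / 2)) = (-1) ^ n := by
  rw [show (2 * n + 1) * (π / 2) = n * π - -(π / 2) by ring, sin_nat_mul_pi_sub, sin_neg,
    sin_pi_div_two]
  ring

theorem stmt_1 (m k : ℕ) :
    ∫ x in (0:ℝ)..(π/2), x^(2*m) * (Real.sin ((2*k:ℝ)*x) / Real.sin x) =
      2 * ((2*m).factorial : ℝ) *
        ∑ j ∈ Finset.range (m+1),
          (-1)^j * Obar k (2*j+1) / ((2*m-2*j).factorial : ℝ) * (π/2)^(2*m-2*j) := by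
  have hkernel : ∀ x ∈ Set.uIoc 0 (π / 2),
      x ^ (2 * m) * (sin (2 * k * x) / sin x) =
        ∑ n ∈ range k, 2 * (x ^ (2 * m) * cos ((2 * n + 1) * x)) := by
    intro x hx
    rw [Set.uIoc_of_le (by positivity)] at hx
    have hsin : sin x ≠ 0 := (sin_pos_of_pos_of_lt_pi hx.1 (by linarith [pi_pos, hx.2])).ne'
    rw [sin_two_mul_nat_mul_eq_sin_mul_sum_cos, mul_div_cancel_left₀ _ hsin, mul_sum, mul_sum]
    exact sum_congr rfl fun n _ => by ring
  rw [integral_congr_ae (Filter.Eventually.of_forall hkernel),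
    integral_finsetSum fun n _ => Continuous.intervalIntegrable (by fun_prop) _ _]
  simp_rw [integral_const_mul,
    fun n : ℕ => integral_pow_two_mul_mul_cos_of_cos_eq_zero (cos_odd_mul_pi_div_two n) m,
    sin_odd_mul_pi_div_two, Obar, mul_sum, sum_div, sum_mul, mul_sum]
  rw [sum_comm]
  exact sum_congr rfl fun j _ => sum_congr rfl fun n _ => by ring
end

section
/- For 0 < x < π/2, tan(x)·ln(sin(x)) = -Σ_{k=1}^∞ (∫₀¹ (1-t)/(1+t) · t^{k-1} dt) · sin(2kx). -/
/-!
Taking imaginary parts of a geometric series gives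
`∑ t^k sin((k+1)θ) = sin θ / (1 - 2t cos θ + t²)` for `|t| < 1`. Integrating termwise against
`(1-t)/(1+t)` on `[0, 1]` is justified by dominated convergence, since
`|(1-t)/(1+t)| t^k ≤ (1-t) t^k` and these bounds sum to `1`. With `θ = 2x` the resulting integral
has the elementary antiderivative `tan x · (log (1+t) - ½ log (1 - 2t cos 2x + t²))`
(note `tan x = sin 2x / (1 + cos 2x)`), and `2 - 2 cos 2x = (2 sin x)²` turns its value into
`-tan x · log (sin x)`.
-/

open Real Set MeasureTheory
open scoped Interval

theorem hasSum_pow_mul_sin_succ_mul (θ : ℝ) {t : ℝ} (ht : |t| < 1) :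
    HasSum (fun k : ℕ => t ^ k * sin ((k + 1) * θ)) (sin θ / (1 - 2 * t * cos θ + t ^ 2)) := by
  set z : ℂ := Complex.exp (θ * Complex.I)
  have hnorm : ‖(t : ℂ) * z‖ < 1 := by
    rwa [norm_mul, Complex.norm_exp_ofReal_mul_I, mul_one, Complex.norm_real, Real.norm_eq_abs]
  have hgeom := Complex.imCLM.hasSum ((hasSum_geometric_of_norm_lt_one hnorm).mul_left z)
  convert hgeom using 1
  · funext k
    have hz : z * ((t : ℂ) * z) ^ k
        = (t ^ k : ℝ) * Complex.exp (((k + 1) * θ : ℝ) * Complex.I) := by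
      rw [mul_pow, mul_left_comm, ← pow_succ', ← Complex.exp_nat_mul]; push_cast; ring_nf
    rw [Complex.imCLM_apply, hz, Complex.im_ofReal_mul, Complex.exp_ofReal_mul_I_im]
  · have hre : z.re = cos θ := Complex.exp_ofReal_mul_I_re θ
    have him : z.im = sin θ := Complex.exp_ofReal_mul_I_im θ
    rw [Complex.imCLM_apply, ← div_eq_mul_inv, Complex.div_im]
    simp only [Complex.normSq_apply, Complex.sub_re, Complex.sub_im, Complex.one_re,
      Complex.one_im, Complex.re_ofReal_mul, Complex.im_ofReal_mul, hre, him]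
    rw [show (1 - t * cos θ) * (1 - t * cos θ) + (0 - t * sin θ) * (0 - t * sin θ)
      = 1 - 2 * t * cos θ + t ^ 2 by linear_combination t ^ 2 * sin_sq_add_cos_sq θ]
    ring

theorem hasSum_one_sub_mul_pow {t : ℝ} (h0 : 0 ≤ t) (h1 : t < 1) :
    HasSum (fun k : ℕ => (1 - t) * t ^ k) 1 := by
  simpa [mul_inv_cancel₀ (sub_ne_zero.2 h1.ne')] using
    (hasSum_geometric_of_lt_one h0 h1).mul_left (1 - t)

theorem hasSum_integral_mul_pow_mul {w f : ℝ → ℝ} {a : ℕ → ℝ}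
    (hw : ContinuousOn w (Icc 0 1)) (hw_le : ∀ t ∈ Ioo (0 : ℝ) 1, |w t| ≤ 1 - t)
    (ha : ∀ k, |a k| ≤ 1)
    (hf : ∀ t ∈ Ioo (0 : ℝ) 1, HasSum (fun k => t ^ k * a k) (f t)) :
    HasSum (fun k => (∫ t in (0 : ℝ)..1, w t * t ^ k) * a k)
      (∫ t in (0 : ℝ)..1, w t * f t) := by
  have hIoo : ∀ᵐ t, t ∈ Ι (0 : ℝ) 1 → t ∈ Ioo (0 : ℝ) 1 :=
    (volume.ae_ne 1).mono fun t hne ht => by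
      rw [uIoc_of_le zero_le_one] at ht
      exact ⟨ht.1, ht.2.lt_of_ne hne⟩
  simp_rw [← intervalIntegral.integral_mul_const]
  refine intervalIntegral.hasSum_integral_of_dominated_convergence (fun k t => (1 - t) * t ^ k)
    (fun k => ?_) (fun k => hIoo.mono fun t h ht => ?_)
    (hIoo.mono fun t h ht => (hasSum_one_sub_mul_pow (h ht).1.le (h ht).2).summable)
    ((intervalIntegrable_const (c := (1 : ℝ))).congr_uIoo fun t ht => ?_)
    (hIoo.mono fun t h ht => by simpa only [mul_assoc] using (hf t (h ht)).mul_left (w t))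
  · rw [uIoc_of_le zero_le_one]
    exact ((hw.mul (continuous_pow k).continuousOn).mul_const (a k) |>.mono
      Ioc_subset_Icc_self).aestronglyMeasurable measurableSet_Ioc
  · obtain ⟨ht0, ht1⟩ := h ht
    rw [Real.norm_eq_abs, abs_mul, abs_mul, abs_of_nonneg (pow_nonneg ht0.le k)]
    calc |w t| * t ^ k * |a k| ≤ (1 - t) * t ^ k * 1 := by
          gcongr
          exacts [hw_le t ⟨ht0, ht1⟩, ha k]
      _ = (1 - t) * t ^ k := mul_one _
  · rw [uIoo_of_le zero_le_one] at ht
    exact (hasSum_one_sub_mul_pow ht.1.le ht.2).tsum_eq.symm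

theorem one_sub_two_mul_mul_cos_add_sq_pos {θ : ℝ} (hθ : sin θ ≠ 0) (t : ℝ) :
    0 < 1 - 2 * t * cos θ + t ^ 2 := by
  have := sq_pos_of_ne_zero hθ
  nlinarith [sq_nonneg (t - cos θ), sin_sq_add_cos_sq θ]

theorem hasDerivAt_log_one_add_sub_half_log {θ t : ℝ} (hθ : 1 + cos θ ≠ 0) (ht : 1 + t ≠ 0)
    (hD : 1 - 2 * t * cos θ + t ^ 2 ≠ 0) :
    HasDerivAt
      (fun t => sin θ / (1 + cos θ) * (log (1 + t) - log (1 - 2 * t * cos θ + t ^ 2) / 2))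
      ((1 - t) / (1 + t) * (sin θ / (1 - 2 * t * cos θ + t ^ 2))) t := by
  have hlin : HasDerivAt (fun t => 1 + t) 1 t := (hasDerivAt_id' t).const_add 1
  have hquad := (((hasDerivAt_id' t).const_mul 2).mul_const (cos θ)).const_sub 1 |>.fun_add
    (hasDerivAt_pow 2 t)
  refine (((hlin.log ht).fun_sub ((hquad.log hD).div_const 2)).const_mul
    (sin θ / (1 + cos θ))).congr_deriv ?_
  -- `D - (t - cos θ) (1 + t) = (1 + cos θ) (1 - t)`
  set D := 1 - 2 * t * cos θ + t ^ 2 with hD_def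
  push_cast
  field_simp
  rw [hD_def]
  ring

theorem integral_eq_neg_tan_mul_log_sin {x : ℝ} (hx : 0 < x) (hx' : x < π / 2) :
    ∫ t in (0 : ℝ)..1, (1 - t) / (1 + t) * (sin (2 * x) / (1 - 2 * t * cos (2 * x) + t ^ 2))
      = -(tan x * log (sin x)) := by
  have hsin : 0 < sin x := sin_pos_of_pos_of_lt_pi hx (by linarith [pi_pos])
  have hcos : 0 < cos x := cos_pos_of_mem_Ioo ⟨by linarith, hx'⟩
  have hD := one_sub_two_mul_mul_cos_add_sq_pos
    (sin_pos_of_pos_of_lt_pi (by linarith) (by linarith) : 0 < sin (2 * x)).ne'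
  have hc2 : 0 < 1 + cos (2 * x) := by
    rw [cos_two_mul]
    nlinarith [pow_pos hcos 2]
  have hcoef : sin (2 * x) / (1 + cos (2 * x)) = tan x := by
    rw [sin_two_mul, cos_two_mul, tan_eq_sin_div_cos]
    field_simp
    ring
  have hD1 : 1 - 2 * 1 * cos (2 * x) + 1 ^ 2 = (2 * sin x) ^ 2 := by
    rw [cos_two_mul]
    linear_combination (-4) * sin_sq_add_cos_sq x
  have hderiv : ∀ t ∈ uIcc (0 : ℝ) 1, HasDerivAt
      (fun t => sin (2 * x) / (1 + cos (2 * x)) *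
        (log (1 + t) - log (1 - 2 * t * cos (2 * x) + t ^ 2) / 2))
      ((1 - t) / (1 + t) * (sin (2 * x) / (1 - 2 * t * cos (2 * x) + t ^ 2))) t := by
    intro t ht
    rw [uIcc_of_le zero_le_one] at ht
    exact hasDerivAt_log_one_add_sub_half_log hc2.ne' (by linarith [ht.1]) (hD t).ne'
  have hcont : ContinuousOn
      (fun t => (1 - t) / (1 + t) * (sin (2 * x) / (1 - 2 * t * cos (2 * x) + t ^ 2)))
      (uIcc 0 1) := by
    rw [uIcc_of_le zero_le_one]
    exact (ContinuousOn.div (by fun_prop) (by fun_prop) fun t ht => by linarith [ht.1]).mul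
      (ContinuousOn.div (by fun_prop) (by fun_prop) fun t _ => (hD t).ne')
  rw [intervalIntegral.integral_eq_sub_of_hasDerivAt hderiv hcont.intervalIntegrable, hcoef, hD1]
  norm_num [log_mul two_ne_zero hsin.ne']

theorem stmt_7 (x : ℝ) (hx : 0 < x) (hx' : x < π/2) :
    HasSum (fun k : ℕ => -((∫ t in (0:ℝ)..1, (1-t)/(1+t) * t^k) * Real.sin (2*((k:ℝ)+1)*x)))
      (Real.tan x * Real.log (Real.sin x)) := by
  have hw : ContinuousOn (fun t : ℝ => (1 - t) / (1 + t)) (Icc 0 1) :=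
    ContinuousOn.div (by fun_prop) (by fun_prop) fun t ht => by linarith [ht.1]
  have hw_le : ∀ t ∈ Ioo (0 : ℝ) 1, |(1 - t) / (1 + t)| ≤ 1 - t := fun t ht => by
    rw [abs_of_nonneg (div_nonneg (by linarith [ht.2]) (by linarith [ht.1]))]
    exact div_le_self (by linarith [ht.2]) (by linarith [ht.1])
  have hf : ∀ t ∈ Ioo (0 : ℝ) 1, HasSum (fun k : ℕ => t ^ k * sin (2 * ((k : ℝ) + 1) * x))
      (sin (2 * x) / (1 - 2 * t * cos (2 * x) + t ^ 2)) := fun t ht => by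
    have ht' : |t| < 1 := abs_lt.2 ⟨by linarith [ht.1], ht.2⟩
    convert hasSum_pow_mul_sin_succ_mul (2 * x) ht' using 4 with k
    ring
  simpa only [integral_eq_neg_tan_mul_log_sin hx hx', neg_neg] using
    (hasSum_integral_mul_pow_mul hw hw_le (fun k => abs_sin_le_one _) hf).neg
end

section
/- For every non-negative integer m and positive integer n, ∫₀^{π/2} x^{2m} cos^{2n-1}(x) dx = ((2m)!/2) · 4^n/(n·C(2n,n)) · Σ_{j=0}^{m} (-1)^j t_n^⋆({2}_j)/(2m-2j)! · (π/2)^{2m-2j}, where t_n^⋆({2}_j) = Σ_{n ≥ k_1 ≥ … ≥ k_j ≥ 1} Π_{i=1}^{j} 1/(2k_i-1)² is the multiple t-harmonic star sum (with t_n^⋆(∅) = 1). -/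
/-!
Write `I(m, n) = ∫₀^{π/2} x^{2m} cos^{2n+1} x dx`. Integrating `x^{2m+2}` by parts twice against
`(cos^{2n+2} x · sin x)' = (2n+3) cos^{2n+3} x - (2n+2) cos^{2n+1} x` gives
`(2n+3)² I(m+1, n+1) = (2n+3)(2n+2) I(m+1, n) - (2m+2)(2m+1) I(m, n+1)`,
together with Wallis' recursion at `m = 0` and
`I(m+1, 0) = (π/2)^{2m+2} - (2m+2)(2m+1) I(m, 0)`.
Normalised by `(2m)!/2 · 4^{n+1}/((n+1) C(2n+2, n+1))`, these become exactly the recursion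
`t_{n+1}^⋆({2}_{j+1}) = t_n^⋆({2}_{j+1}) + t_{n+1}^⋆({2}_j)/(2n+1)²` summed against
`(-1)^j (π/2)^{2m-2j}/(2m-2j)!`, so the formula follows by induction on `n` and then `m`.
-/

open Real Finset

/-- Multiple t-harmonic star sum `t_n^⋆({2}_j)`. -/
noncomputable def tstar : ℕ → ℕ → ℝ
  | _, 0 => 1
  | n, j+1 => ∑ k ∈ Finset.Icc 1 n, tstar k j / ((2*(k:ℝ))-1)^2

open intervalIntegral

lemma tstar_zero_succ (j : ℕ) : tstar 0 (j + 1) = 0 := by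
  simp [tstar]

lemma tstar_succ_succ (n j : ℕ) :
    tstar (n + 1) (j + 1) = tstar n (j + 1) + tstar (n + 1) j / (2 * (n : ℝ) + 1) ^ 2 := by
  rw [tstar, sum_Icc_succ_top (by omega)]
  congr 1
  push_cast
  ring

noncomputable def tstarSum (n m : ℕ) : ℝ :=
  ∑ j ∈ range (m + 1),
    (-1) ^ j * tstar n j / ((2 * m - 2 * j).factorial : ℝ) * (π / 2) ^ (2 * m - 2 * j)

lemma tstarSum_zero_right (n : ℕ) : tstarSum n 0 = 1 := by
  simp [tstarSum, tstar]

lemma tstarSum_zero_left (m : ℕ) : tstarSum 0 m = (π / 2) ^ (2 * m) / (2 * m).factorial := by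
  rw [tstarSum, sum_range_succ', sum_eq_zero fun j _ => by simp [tstar_zero_succ]]
  simp [tstar, div_eq_inv_mul]

lemma tstarSum_succ_succ (n m : ℕ) :
    tstarSum (n + 1) (m + 1) =
      tstarSum n (m + 1) - tstarSum (n + 1) m / (2 * (n : ℝ) + 1) ^ 2 := by
  have hterm : ∀ j ∈ range (m + 1),
      (-1) ^ (j + 1) * tstar (n + 1) (j + 1) / ((2 * (m + 1) - 2 * (j + 1)).factorial : ℝ) *
          (π / 2) ^ (2 * (m + 1) - 2 * (j + 1)) =
        (-1) ^ (j + 1) * tstar n (j + 1) / ((2 * (m + 1) - 2 * (j + 1)).factorial : ℝ) *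
            (π / 2) ^ (2 * (m + 1) - 2 * (j + 1)) -
          (-1) ^ j * tstar (n + 1) j / ((2 * m - 2 * j).factorial : ℝ) * (π / 2) ^ (2 * m - 2 * j) /
            (2 * (n : ℝ) + 1) ^ 2 := by
    intro j _
    rw [show 2 * (m + 1) - 2 * (j + 1) = 2 * m - 2 * j by omega, tstar_succ_succ]
    ring
  rw [tstarSum, tstarSum, tstarSum, sum_range_succ', sum_range_succ' _ (m + 1),
    sum_congr rfl hterm, sum_sub_distrib, sum_div]
  simp only [tstar]
  ring

noncomputable def cosMoment (p k : ℕ) : ℝ :=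
  ∫ x in (0 : ℝ)..π / 2, x ^ p * cos x ^ k

lemma integral_pow_succ_mul_deriv (b : ℝ) (p : ℕ) {f f' : ℝ → ℝ}
    (hf : ∀ x, HasDerivAt f (f' x) x) (hf' : Continuous f') :
    ∫ x in (0 : ℝ)..b, x ^ (p + 1) * f' x =
      b ^ (p + 1) * f b - (p + 1) * ∫ x in (0 : ℝ)..b, x ^ p * f x := by
  have hpow : ∀ x ∈ Set.uIcc 0 b, HasDerivAt (fun y : ℝ => y ^ (p + 1)) ((p + 1) * x ^ p) x :=
    fun x _ => by simpa using hasDerivAt_pow (p + 1) x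
  rw [integral_mul_deriv_eq_deriv_mul hpow (fun x _ => hf x)
    (Continuous.intervalIntegrable (by fun_prop) _ _) (hf'.intervalIntegrable _ _),
    ← integral_const_mul]
  simp only [zero_pow (Nat.succ_ne_zero p), zero_mul, sub_zero, mul_assoc]

lemma hasDerivAt_cos_pow_succ_mul_sin (k : ℕ) (x : ℝ) :
    HasDerivAt (fun y => cos y ^ (k + 1) * sin y)
      ((k + 2) * cos x ^ (k + 2) - (k + 1) * cos x ^ k) x := by
  refine (((hasDerivAt_cos x).fun_pow (k + 1)).mul (hasDerivAt_sin x)).congr_deriv ?_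
  push_cast
  linear_combination (-(k + 1) * cos x ^ k) * sin_sq_add_cos_sq x

lemma integral_pow_mul_sub_eq_cosMoment (p k l : ℕ) (a b : ℝ) :
    ∫ x in (0 : ℝ)..π / 2, x ^ p * (a * cos x ^ k - b * cos x ^ l) =
      a * cosMoment p k - b * cosMoment p l := by
  simp only [cosMoment, mul_sub, ← integral_const_mul]
  rw [← integral_sub (Continuous.intervalIntegrable (by fun_prop) _ _)
    (Continuous.intervalIntegrable (by fun_prop) _ _)]
  congr 1 with x
  ring

lemma integral_pow_succ_mul_cos_pow_mul_sin (p k : ℕ) :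
    (k + 1) * ∫ x in (0 : ℝ)..π / 2, x ^ (p + 1) * (cos x ^ k * sin x) =
      (p + 1) * cosMoment p (k + 1) := by
  have hderiv (x : ℝ) :
      HasDerivAt (fun y => cos y ^ (k + 1)) (-((k + 1) * (cos x ^ k * sin x))) x :=
    ((hasDerivAt_cos x).fun_pow (k + 1)).congr_deriv (by push_cast; ring)
  have h := integral_pow_succ_mul_deriv (π / 2) p hderiv (by fun_prop)
  have hconst : ∫ x in (0 : ℝ)..π / 2, x ^ (p + 1) * -((k + 1) * (cos x ^ k * sin x)) =
      -((k + 1) * ∫ x in (0 : ℝ)..π / 2, x ^ (p + 1) * (cos x ^ k * sin x)) := by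
    rw [← integral_const_mul, ← integral_neg]
    congr 1 with x
    ring
  simp only [cos_pi_div_two, zero_pow (Nat.succ_ne_zero k), mul_zero, zero_sub] at h
  rw [cosMoment]
  linear_combination -(hconst.symm.trans h)

lemma cosMoment_zero_one : cosMoment 0 1 = 1 := by
  simp [cosMoment]

lemma cosMoment_add_two_one (p : ℕ) :
    cosMoment (p + 2) 1 = (π / 2) ^ (p + 2) - (p + 2) * (p + 1) * cosMoment p 1 := by
  have h := integral_pow_succ_mul_deriv (π / 2) (p + 1) hasDerivAt_sin continuous_cos
  have hsin := integral_pow_succ_mul_cos_pow_mul_sin p 0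
  simp only [sin_pi_div_two, mul_one, pow_zero, one_mul, CharP.cast_eq_zero, zero_add, add_assoc,
    Nat.reduceAdd] at h hsin
  rw [cosMoment]
  simp only [pow_one]
  push_cast at h
  linear_combination h - (p + 2) * hsin

lemma cosMoment_zero_add_two (k : ℕ) :
    (k + 2) * cosMoment 0 (k + 2) = (k + 1) * cosMoment 0 k := by
  have h := integral_eq_sub_of_hasDerivAt (fun x _ => hasDerivAt_cos_pow_succ_mul_sin k x)
    (a := 0) (b := π / 2) (Continuous.intervalIntegrable (by fun_prop) _ _)
  have hcomb := integral_pow_mul_sub_eq_cosMoment 0 (k + 2) k (k + 2) (k + 1)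
  simp only [pow_zero, one_mul, cos_pi_div_two, sin_zero, mul_zero] at h hcomb
  simp only [zero_pow (Nat.succ_ne_zero k), zero_mul, sub_zero] at h
  linear_combination hcomb.symm.trans h

lemma cosMoment_add_two_add_two (p k : ℕ) :
    (k + 2) ^ 2 * cosMoment (p + 2) (k + 2) =
      (k + 2) * (k + 1) * cosMoment (p + 2) k - (p + 2) * (p + 1) * cosMoment p (k + 2) := by
  have h := integral_pow_succ_mul_deriv (π / 2) (p + 1) (hasDerivAt_cos_pow_succ_mul_sin k)
    (by fun_prop)
  have hsin := integral_pow_succ_mul_cos_pow_mul_sin p (k + 1)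
  rw [integral_pow_mul_sub_eq_cosMoment] at h
  simp only [cos_pi_div_two, zero_pow (Nat.succ_ne_zero k), zero_mul, mul_zero, zero_sub] at h
  push_cast at h hsin
  linear_combination (k + 2) * h - (p + 2) * hsin

noncomputable def wallisFactor (n : ℕ) : ℝ :=
  4 ^ n / ((n : ℝ) * (Nat.choose (2 * n) n))

lemma wallisFactor_one : wallisFactor 1 = 2 := by
  norm_num [wallisFactor]

lemma wallisFactor_succ {n : ℕ} (hn : 0 < n) :
    (2 * n + 1) * wallisFactor (n + 1) = 2 * n * wallisFactor n := by
  have h : ((n + 1 : ℕ) : ℝ) * Nat.centralBinom (n + 1) =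
      2 * (2 * n + 1) * Nat.centralBinom n := by
    exact_mod_cast Nat.succ_mul_centralBinom_succ n
  have hc : (Nat.centralBinom n : ℝ) ≠ 0 := by exact_mod_cast (Nat.centralBinom_pos n).ne'
  simp only [wallisFactor, ← Nat.centralBinom_eq_two_mul_choose]
  rw [h]
  field_simp
  ring

lemma factorial_two_mul_succ (m : ℕ) :
    ((2 * (m + 1)).factorial : ℝ) = (2 * m + 2) * (2 * m + 1) * (2 * m).factorial := by
  rw [show 2 * (m + 1) = 2 * m + 1 + 1 by ring, Nat.factorial_succ, Nat.factorial_succ]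
  push_cast
  ring

lemma cosMoment_two_mul_one (m : ℕ) :
    cosMoment (2 * m) 1 = (2 * m).factorial * tstarSum 1 m := by
  induction m with
  | zero => simp [cosMoment_zero_one, tstarSum_zero_right]
  | succ m ih =>
    have hfac : ((2 * m).factorial : ℝ) ≠ 0 := by positivity
    have hrec := cosMoment_add_two_one (2 * m)
    rw [show 2 * m + 2 = 2 * (m + 1) by ring, ih] at hrec
    rw [hrec, tstarSum_succ_succ 0 m, tstarSum_zero_left, factorial_two_mul_succ]
    field_simp
    push_cast
    ring

lemma cosMoment_two_mul_odd (m N : ℕ) :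
    cosMoment (2 * m) (2 * N + 1) =
      (2 * m).factorial / 2 * wallisFactor (N + 1) * tstarSum (N + 1) m := by
  induction N generalizing m with
  | zero => simp [cosMoment_two_mul_one, wallisFactor_one]
  | succ N ihN =>
    have hw := wallisFactor_succ (n := N + 1) (by omega)
    have hodd : (2 * N + 3 : ℝ) ≠ 0 := by positivity
    induction m with
    | zero =>
      have h := cosMoment_zero_add_two (2 * N + 1)
      have h0 := ihN 0
      rw [show 2 * N + 1 + 2 = 2 * (N + 1) + 1 by ring] at h
      simp only [mul_zero, Nat.factorial_zero, tstarSum_zero_right] at h0 ⊢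
      refine mul_left_cancel₀ hodd ?_
      push_cast at h hw ⊢
      linear_combination h + (2 * N + 2) * h0 - hw / 2
    | succ m ih =>
      have h := cosMoment_add_two_add_two (2 * m) (2 * N + 1)
      rw [show 2 * N + 1 + 2 = 2 * (N + 1) + 1 by ring, show 2 * m + 2 = 2 * (m + 1) by ring, ihN,
        ih] at h
      have hs : (2 * N + 3 : ℝ) ^ 2 * tstarSum (N + 2) (m + 1) =
          (2 * N + 3) ^ 2 * tstarSum (N + 1) (m + 1) - tstarSum (N + 2) m := by
        rw [tstarSum_succ_succ]
        push_cast
        field_simp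
        ring
      have hf := factorial_two_mul_succ m
      refine mul_left_cancel₀ (pow_ne_zero 2 hodd) ?_
      push_cast at h hw ⊢
      linear_combination h - ((2 * (m + 1)).factorial / 2 * wallisFactor (N + 2)) * hs
        - ((2 * N + 3) * (2 * (m + 1)).factorial / 2 * tstarSum (N + 1) (m + 1)) * hw
        + (wallisFactor (N + 2) * tstarSum (N + 2) m / 2) * hf

theorem stmt_8 (m n : ℕ) (hn : 0 < n) :
    ∫ x in (0:ℝ)..(π/2), x^(2*m) * (Real.cos x)^(2*n-1) =
      ((2*m).factorial : ℝ) / 2 * (4^n / ((n:ℝ) * (Nat.choose (2*n) n))) *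
        ∑ j ∈ Finset.range (m+1),
          (-1)^j * tstar n j / ((2*m-2*j).factorial : ℝ) * (π/2)^(2*m-2*j) := by
  obtain ⟨N, rfl⟩ : ∃ N, n = N + 1 := ⟨n - 1, by omega⟩
  rw [show 2 * (N + 1) - 1 = 2 * N + 1 by omega]
  exact cosMoment_two_mul_odd m N
end

section
/- Σ_{n=1}^∞ 4^n/(n² C(2n,n)) = π²/2. -/
/-!
Writing `cₙ` for the `n`-th term, the series is the value at `t = π / 2` of the arcsine-squared
expansion `∑ cₙ sin t ^ (2n+2) = 2 t²`. Instead of summing that series we carry the exact remainder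
`R_N(t) = 4^(N+1) / C(2N,N) * ∫₀ᵗ (t - x) sin^(2N) x dx`. Integrating the Wallis reduction
`(cos x sin^(k+1) x)' = (k+1) sin^k x - (k+2) sin^(k+2) x` against `t - x` gives
`R_N = c_N sin t ^ (2N+2) + R_(N+1)`, and `R_0(t) = 2 t²`. As `R_N ≥ 0`, the partial sums (at
`t = π / 2`) are at most `π² / 2`; for `t < π / 2` we have `R_N(t) → 0`, since `4^N / C(2N,N) ≤ 2N`
and `sin t < 1`, so the sum is at least `2 t²`.
-/

open Real Finset

open Filter Topology intervalIntegral

theorem integral_sub_mul_sin_pow_reduction (k : ℕ) (t : ℝ) :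
    (k + 1) * (∫ x in 0..t, (t - x) * sin x ^ k)
      - (k + 2) * ∫ x in 0..t, (t - x) * sin x ^ (k + 2) = sin t ^ (k + 2) / (k + 2) := by
  have hderiv : ∀ x ∈ Set.uIcc 0 t,
      HasDerivAt (fun y => (t - y) * (cos y * sin y ^ (k + 1)) + sin y ^ (k + 2) / (k + 2))
        ((k + 1) * ((t - x) * sin x ^ k) - (k + 2) * ((t - x) * sin x ^ (k + 2))) x := by
    intro x _
    refine ((((hasDerivAt_id x).const_sub t).mul ((hasDerivAt_cos x).mul
      ((hasDerivAt_sin x).pow (k + 1)))).add (((hasDerivAt_sin x).pow (k + 2)).div_const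
        ((k : ℝ) + 2))).congr_deriv ?_
    simp only [Pi.mul_apply, Pi.pow_apply, id, Nat.add_sub_cancel,
      show k + 2 - 1 = k + 1 by omega]
    push_cast
    field_simp
    linear_combination (k + 1) * (t - x) * sin x ^ k * (sin_sq_add_cos_sq x)
  have hcont : ∀ m : ℕ, Continuous fun x => (t - x) * sin x ^ m := by fun_prop
  rw [← integral_const_mul, ← integral_const_mul, ← integral_sub
    (((hcont k).const_mul _).intervalIntegrable _ _)
    (((hcont (k + 2)).const_mul _).intervalIntegrable _ _),
    integral_eq_sub_of_hasDerivAt hderiv ((by fun_prop : Continuous _).intervalIntegrable _ _)]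
  simp

noncomputable def arcsinSqRemainder (n : ℕ) (t : ℝ) : ℝ :=
  4 ^ (n + 1) / n.centralBinom * ∫ x in 0..t, (t - x) * sin x ^ (2 * n)

theorem arcsinSqRemainder_zero (t : ℝ) : arcsinSqRemainder 0 t = 2 * t ^ 2 := by
  simp [arcsinSqRemainder, integral_comp_sub_left fun x => x]
  ring

theorem arcsinSqRemainder_eq_add_succ (n : ℕ) (t : ℝ) :
    arcsinSqRemainder n t = 4 ^ (n + 1) / ((n + 1) ^ 2 * (n + 1).centralBinom) * sin t ^ (2 * n + 2)
      + arcsinSqRemainder (n + 1) t := by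
  have hC : ((n + 1 : ℕ) : ℝ) * (n + 1).centralBinom = 2 * (2 * n + 1) * n.centralBinom := by
    exact_mod_cast Nat.succ_mul_centralBinom_succ n
  have hI := integral_sub_mul_sin_pow_reduction (2 * n) t
  have hC0 : (0 : ℝ) < n.centralBinom := by exact_mod_cast n.centralBinom_pos
  have hC1 : (0 : ℝ) < (n + 1).centralBinom := by exact_mod_cast (n + 1).centralBinom_pos
  unfold arcsinSqRemainder
  push_cast at hC hI ⊢
  rw [show 2 * (n + 1) = 2 * n + 2 by ring]
  field_simp at hI ⊢
  linear_combination 4 ^ (n + 1) * (n + 1) * (∫ x in 0..t, (t - x) * sin x ^ (2 * n)) * hC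
    + 4 ^ (n + 1) * n.centralBinom * hI

theorem sum_add_arcsinSqRemainder (N : ℕ) (t : ℝ) :
    ∑ n ∈ range N, 4 ^ (n + 1) / ((n + 1) ^ 2 * (n + 1).centralBinom) * sin t ^ (2 * n + 2)
      + arcsinSqRemainder N t = 2 * t ^ 2 := by
  induction N with
  | zero => simp [arcsinSqRemainder_zero]
  | succ N ih => rw [sum_range_succ, ← ih, arcsinSqRemainder_eq_add_succ N t]; ring

theorem arcsinSqRemainder_nonneg (n : ℕ) {t : ℝ} (ht : 0 ≤ t) : 0 ≤ arcsinSqRemainder n t := by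
  refine mul_nonneg (by positivity) (integral_nonneg ht fun x hx => ?_)
  exact mul_nonneg (sub_nonneg.2 hx.2) ((even_two_mul n).pow_nonneg _)

theorem integral_sub_mul_sin_pow_le (m : ℕ) {t : ℝ} (ht0 : 0 ≤ t) (ht : t ≤ π / 2) :
    ∫ x in 0..t, (t - x) * sin x ^ m ≤ t ^ 2 * sin t ^ m := by
  refine (Real.le_norm_self _).trans
    ((norm_integral_le_of_norm_le_const (C := t * sin t ^ m) fun x hx => ?_).trans_eq ?_)
  · rw [Set.uIoc_of_le ht0] at hx
    have hsin : 0 ≤ sin x := sin_nonneg_of_nonneg_of_le_pi hx.1.le (by linarith [hx.2, pi_pos])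
    rw [norm_mul, norm_pow, Real.norm_of_nonneg (sub_nonneg.2 hx.2), Real.norm_of_nonneg hsin]
    exact mul_le_mul (by linarith [hx.1]) (pow_le_pow_left₀ hsin
      (sin_le_sin_of_le_of_le_pi_div_two (by linarith [hx.1, pi_pos]) ht hx.2) m)
      (by positivity) ht0
  · rw [sub_zero, abs_of_nonneg ht0]
    ring

theorem tendsto_arcsinSqRemainder {t : ℝ} (ht0 : 0 ≤ t) (ht : t < π / 2) :
    Tendsto (fun n => arcsinSqRemainder n t) atTop (𝓝 0) := by
  have hsin0 : 0 ≤ sin t ^ 2 := sq_nonneg _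
  have hsin1 : sin t ^ 2 < 1 := by
    rw [sq_lt_one_iff_abs_lt_one, abs_of_nonneg (sin_nonneg_of_nonneg_of_le_pi ht0 (by linarith))]
    simpa using sin_lt_sin_of_lt_of_le_pi_div_two (by linarith) le_rfl ht
  have hbound : ∀ n : ℕ, 0 < n → arcsinSqRemainder n t ≤ 8 * t ^ 2 * (n * (sin t ^ 2) ^ n) := by
    intro n hn
    have hC : (4 : ℝ) ^ n ≤ 2 * n * n.centralBinom := by
      exact_mod_cast Nat.four_pow_le_two_mul_self_mul_centralBinom n hn
    have hC0 : (0 : ℝ) < n.centralBinom := by exact_mod_cast n.centralBinom_pos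
    calc arcsinSqRemainder n t ≤ 4 ^ (n + 1) / n.centralBinom * (t ^ 2 * sin t ^ (2 * n)) :=
          mul_le_mul_of_nonneg_left (integral_sub_mul_sin_pow_le _ ht0 ht.le) (by positivity)
      _ ≤ 8 * n * (t ^ 2 * sin t ^ (2 * n)) := by
          refine mul_le_mul_of_nonneg_right ?_
            (mul_nonneg (sq_nonneg t) ((even_two_mul n).pow_nonneg _))
          rw [div_le_iff₀ hC0, pow_succ]
          linarith
      _ = 8 * t ^ 2 * (n * (sin t ^ 2) ^ n) := by rw [← pow_mul]; ring
  refine squeeze_zero' (Eventually.of_forall fun n => arcsinSqRemainder_nonneg n ht0)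
    ((eventually_gt_atTop 0).mono hbound) ?_
  simpa using (tendsto_self_mul_const_pow_of_lt_one hsin0 hsin1).const_mul (8 * t ^ 2)

theorem stmt_11 :
    ∑' n : ℕ, 4^(n+1) / (((n:ℝ)+1)^2 * (Nat.choose (2*(n+1)) (n+1))) = π^2 / 2 := by
  set c : ℕ → ℝ := fun n => 4 ^ (n + 1) / (((n : ℝ) + 1) ^ 2 * (n + 1).centralBinom)
  have hc : ∀ n, 0 ≤ c n := fun n => by positivity
  have hle : ∀ N, ∑ n ∈ range N, c n ≤ π ^ 2 / 2 := fun N => by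
    have h := sum_add_arcsinSqRemainder N (π / 2)
    simp only [sin_pi_div_two, one_pow, mul_one] at h
    linarith [arcsinSqRemainder_nonneg N (by positivity : 0 ≤ π / 2)]
  have hge : ∀ t ∈ Set.Ioo 0 (π / 2), 2 * t ^ 2 ≤ ∑' n, c n := fun t ht => by
    have hsin : 0 ≤ sin t := sin_nonneg_of_nonneg_of_le_pi ht.1.le (by linarith [ht.2, pi_pos])
    have hsum_ge : ∀ N, 2 * t ^ 2 - arcsinSqRemainder N t ≤ ∑ n ∈ range N, c n := fun N => by
      rw [← sum_add_arcsinSqRemainder N t, add_sub_cancel_right]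
      exact sum_le_sum fun n _ => mul_le_of_le_one_right (hc n) (pow_le_one₀ hsin (sin_le_one t))
    refine le_of_tendsto_of_tendsto' ?_ (summable_of_sum_range_le hc hle).hasSum.tendsto_sum_nat
      hsum_ge
    simpa using (tendsto_arcsinSqRemainder ht.1.le ht.2).const_sub (2 * t ^ 2)
  refine le_antisymm (Real.tsum_le_of_sum_range_le hc hle) ?_
  have hlim : Tendsto (fun t : ℝ => 2 * t ^ 2) (𝓝[<] (π / 2)) (𝓝 (π ^ 2 / 2)) := by
    have h : Continuous fun t : ℝ => 2 * t ^ 2 := by fun_prop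
    convert (h.tendsto (π / 2)).mono_left nhdsWithin_le_nhds using 2
    ring
  exact le_of_tendsto hlim (eventually_of_mem (Ioo_mem_nhdsLT (by positivity)) hge)
end
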